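/- arXiv:1403.6015 — 4 statements merged into one kernel-verified Lean document; each statement's English description precedes it below -/
import Mathlib

section
/- Invertibility criterion for block matrices with low-rank off-diagonal blocks: let A be an invertible m×m real matrix, B an invertible n×n real matrix, U an m×p real matrix, and V an n×p real matrix. Then the block matrix [[A, U·Vᵀ], [V·Uᵀ, B]] is invertible if and only if the p×p matrix I_p − (Uᵀ·A⁻¹·U)·(Vᵀ·B⁻¹·V) is invertible. -/
/-! By the Schur complement, `det [[A, U W], [V X, B]] = det A · det (B - V (X A⁻¹ U) W)`.
Pulling out `det B` and applying Sylvester's identity `det (1 - M N) = det (1 - N M)` turns the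
second factor into `det B · det (1 - (X A⁻¹ U) (W B⁻¹ V))`, a determinant of the small inner
size. -/

open Matrix

namespace Matrix

variable {R : Type*} [CommRing R] {l m n : Type*}
  [Fintype l] [DecidableEq l] [Fintype m] [DecidableEq m] [Fintype n] [DecidableEq n]

theorem det_sub_mul_mul_mul {B : Matrix n n R} (hB : IsUnit B.det) (V : Matrix n l R)
    (K : Matrix l l R) (W : Matrix l n R) :
    (B - V * K * W).det = B.det * (1 - K * (W * B⁻¹ * V)).det := by
  rw [sub_eq_add_neg, ← Matrix.neg_mul, det_add_mul _ _ hB, det_one_sub_mul_comm,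
    Matrix.mul_neg, ← sub_eq_add_neg]
  simp only [Matrix.mul_assoc]

theorem det_fromBlocks_mul_mul {A : Matrix m m R} {B : Matrix n n R} (hA : IsUnit A.det)
    (hB : IsUnit B.det) (U : Matrix m l R) (W : Matrix l n R) (V : Matrix n l R)
    (X : Matrix l m R) :
    (fromBlocks A (U * W) (V * X) B).det =
      A.det * B.det * (1 - (X * A⁻¹ * U) * (W * B⁻¹ * V)).det := by
  let := invertibleOfIsUnitDet A hA
  rw [det_fromBlocks₁₁, invOf_eq_nonsing_inv, mul_assoc, ← det_sub_mul_mul_mul hB]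
  simp only [Matrix.mul_assoc]

theorem isUnit_fromBlocks_mul_mul_iff {A : Matrix m m R} {B : Matrix n n R} (hA : IsUnit A)
    (hB : IsUnit B) (U : Matrix m l R) (W : Matrix l n R) (V : Matrix n l R)
    (X : Matrix l m R) :
    IsUnit (fromBlocks A (U * W) (V * X) B) ↔ IsUnit (1 - (X * A⁻¹ * U) * (W * B⁻¹ * V)) := by
  rw [isUnit_iff_isUnit_det] at hA hB ⊢
  rw [isUnit_iff_isUnit_det, det_fromBlocks_mul_mul hA hB, IsUnit.mul_iff, IsUnit.mul_iff]
  simp only [hA, hB, true_and]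

end Matrix

theorem isUnit_block_lowrank_offdiag_iff (m n p : ℕ)
    (A : Matrix (Fin m) (Fin m) ℝ) (B : Matrix (Fin n) (Fin n) ℝ)
    (U : Matrix (Fin m) (Fin p) ℝ) (V : Matrix (Fin n) (Fin p) ℝ)
    (hA : IsUnit A) (hB : IsUnit B) :
    IsUnit (Matrix.fromBlocks A (U * Vᵀ) (V * Uᵀ) B) ↔
      IsUnit ((1 : Matrix (Fin p) (Fin p) ℝ) - (Uᵀ * A⁻¹ * U) * (Vᵀ * B⁻¹ * V)) :=
  isUnit_fromBlocks_mul_mul_iff hA hB U Vᵀ V Uᵀ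
end

section
/- Nonnegativity of the Gaussian process predictive variance: let K be an n×n real symmetric matrix, v ∈ ℝⁿ, and c ∈ ℝ such that the (n+1)×(n+1) bordered block matrix [[K, v], [vᵀ, c]] is positive semidefinite, and let σ be a nonzero real number. Then σ²·I_n + K is invertible and c − vᵀ·(σ²·I_n + K)⁻¹·v ≥ 0. -/
/-!
Adding the positive semidefinite matrix `diag(σ²I, 0)` to the bordered matrix keeps it positive
semidefinite and turns its top-left block into the positive definite, hence invertible,
`σ²I + K`. The Schur complement of that block, the `1 × 1` matrix
`c - vᵀ (σ²I + K)⁻¹ v`, is then positive semidefinite.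
-/

open Matrix

namespace Matrix.PosSemidef

variable {m n : Type*} [Fintype m] [Fintype n] [DecidableEq m]

theorem fromBlocks_zero_zero_zero {R : Type*} [Ring R] [PartialOrder R] [StarRing R]
    {S : Matrix m m R} (hS : S.PosSemidef) :
    (fromBlocks S 0 0 (0 : Matrix n n R)).PosSemidef := by
  simpa [conjTranspose_fromCols_eq_fromRows_conjTranspose, fromRows_mul, mul_fromCols,
    ← fromCols_fromRows_eq_fromBlocks] using
    hS.conjTranspose_mul_mul_same (fromCols (1 : Matrix m m R) (0 : Matrix m n R))

theorem schur_complement_add_left {R : Type*} [Field R] [PartialOrder R] [StarRing R]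
    [StarOrderedRing R] {K S : Matrix m m R} {B : Matrix m n R} {D : Matrix n n R}
    (hM : (fromBlocks K B Bᴴ D).PosSemidef) (hS : S.PosSemidef) (hSK : (S + K).PosDef) :
    (D - Bᴴ * (S + K)⁻¹ * B).PosSemidef := by
  have := hSK.isUnit.invertible
  refine (PosDef.fromBlocks₁₁ B D hSK).1 ?_
  simpa [fromBlocks_add] using hS.fromBlocks_zero_zero_zero.add hM

end Matrix.PosSemidef

theorem gp_predictive_variance_nonneg_general (n : ℕ)
    (K : Matrix (Fin n) (Fin n) ℝ) (v : Fin n → ℝ) (c : ℝ)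
    (hPSD : (Matrix.fromBlocks K (Matrix.replicateCol (Fin 1) v) (Matrix.replicateRow (Fin 1) v)
        (Matrix.of fun _ _ => c)).PosSemidef)
    (σ : ℝ) (hσ : σ ≠ 0) :
    IsUnit (σ ^ 2 • (1 : Matrix (Fin n) (Fin n) ℝ) + K) ∧
      0 ≤ c - v ⬝ᵥ (σ ^ 2 • (1 : Matrix (Fin n) (Fin n) ℝ) + K)⁻¹.mulVec v := by
  have hσI : (σ ^ 2 • (1 : Matrix (Fin n) (Fin n) ℝ)).PosDef := PosDef.one.smul (by positivity)
  have hA : (σ ^ 2 • (1 : Matrix (Fin n) (Fin n) ℝ) + K).PosDef :=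
    hσI.add_posSemidef (hPSD.submatrix Sum.inl)
  refine ⟨hA.isUnit, ?_⟩
  have hRow : replicateRow (Fin 1) v = (replicateCol (Fin 1) v)ᴴ := by
    rw [conjTranspose_replicateCol, star_trivial]
  rw [hRow] at hPSD
  have hSchur := hPSD.schur_complement_add_left hσI.posSemidef hA
  rw [← hRow, Matrix.mul_assoc, ← replicateCol_mulVec, replicateRow_mul_replicateCol] at hSchur
  simpa using hSchur.diag_nonneg (i := 0)

theorem gp_predictive_variance_nonneg (n : ℕ)
    (K : Matrix (Fin n) (Fin n) ℝ) (v : Fin n → ℝ) (c : ℝ)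
    (hKsymm : Kᵀ = K)
    (hPSD : (Matrix.fromBlocks K (Matrix.replicateCol (Fin 1) v) (Matrix.replicateRow (Fin 1) v)
        (Matrix.of fun _ _ => c)).PosSemidef)
    (σ : ℝ) (hσ : σ ≠ 0) :
    IsUnit (σ ^ 2 • (1 : Matrix (Fin n) (Fin n) ℝ) + K) ∧
      0 ≤ c - v ⬝ᵥ (σ ^ 2 • (1 : Matrix (Fin n) (Fin n) ℝ) + K)⁻¹.mulVec v :=
  gp_predictive_variance_nonneg_general n K v c hPSD σ hσ
end

section
/- Hermite expansion of the Gaussian kernel (the identity underlying the fast Gauss transform): define h_j(x) = (−1)^j · (d/dx)^j e^{−x²} (the j-th Hermite function, i.e., h_j(x) = e^{−x²} H_j(x) with H_j the physicists' Hermite polynomial). Then for all real s, t, s₀ and every δ > 0, e^{−(t−s)²/δ} = Σ_{j=0}^∞ (1/j!) · ((s − s₀)/√δ)^j · h_j((t − s₀)/√δ), where the series converges. -/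
/-- The `j`-th Hermite function `h_j(x) = (−1)^j (d/dx)^j e^{−x²}`. -/
noncomputable def hermiteFun (j : ℕ) (x : ℝ) : ℝ :=
  (-1 : ℝ) ^ j * iteratedDeriv j (fun u : ℝ => Real.exp (-u ^ 2)) x

/-!
The Gaussian `u ↦ e^{-u²}` is the restriction of the entire function `z ↦ e^{-z²}`, so its
Taylor series at any real point converges to it on the whole line; the Taylor coefficients are
`(-1)^j h_j(x) / j!`, and substituting `x = (t - s₀)/√δ`, `y - x = -(s - s₀)/√δ` gives the
expansion.
-/

theorem deriv_ofReal_eq_of_forall_ofReal {f : ℂ → ℂ} {g : ℝ → ℝ} {x : ℝ}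
    (hf : DifferentiableAt ℂ f x) (hfg : ∀ y : ℝ, f y = g y) :
    deriv f x = deriv g x := by
  have hf_real : HasDerivAt (fun y : ℝ => (g y : ℂ)) (deriv f x) x := by
    simpa only [hfg] using hf.hasDerivAt.comp_ofReal
  have hg : HasDerivAt g (deriv f x).re x := by
    simpa only [hfg, Complex.ofReal_re] using hf.hasDerivAt.real_of_complex
  rw [hg.deriv]
  exact hf_real.unique hg.ofReal_comp

theorem iteratedDeriv_ofReal_eq_of_forall_ofReal {f : ℂ → ℂ} {g : ℝ → ℝ}
    (hf : Differentiable ℂ f) (hfg : ∀ y : ℝ, f y = g y) (n : ℕ) (x : ℝ) :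
    iteratedDeriv n f x = iteratedDeriv n g x := by
  induction n generalizing f g with
  | zero => simpa only [iteratedDeriv_zero] using hfg x
  | succ n ih =>
    simp only [iteratedDeriv_succ']
    exact ih hf.contDiff.differentiable_deriv_two
      (fun y => deriv_ofReal_eq_of_forall_ofReal (hf y) hfg)

theorem hasSum_taylorSeries_of_forall_ofReal {f : ℂ → ℂ} {g : ℝ → ℝ}
    (hf : Differentiable ℂ f) (hfg : ∀ y : ℝ, f y = g y) (x y : ℝ) :
    HasSum (fun n : ℕ => (n.factorial : ℝ)⁻¹ * (y - x) ^ n * iteratedDeriv n g x) (g y) := by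
  have h := Complex.hasSum_taylorSeries_of_entire hf (x : ℂ) (y : ℂ)
  simp only [iteratedDeriv_ofReal_eq_of_forall_ofReal hf hfg, hfg, smul_eq_mul, ← mul_assoc] at h
  exact Complex.hasSum_ofReal.mp (by push_cast; exact h)

theorem hasSum_hermiteFun (a x : ℝ) :
    HasSum (fun j : ℕ => (1 / (j.factorial : ℝ)) * a ^ j * hermiteFun j x)
      (Real.exp (-(x - a) ^ 2)) := by
  have hgauss : ∀ y : ℝ, Complex.exp (-(y : ℂ) ^ 2) = (Real.exp (-y ^ 2) : ℂ) := by
    intro y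
    push_cast
    rfl
  have h := hasSum_taylorSeries_of_forall_ofReal
    (by fun_prop : Differentiable ℂ fun z : ℂ => Complex.exp (-z ^ 2)) hgauss x (x - a)
  convert h using 2 with j
  rw [hermiteFun, sub_sub_cancel_left, neg_pow]
  ring

theorem hermite_expansion_gaussian_kernel (s t s₀ δ : ℝ) (hδ : 0 < δ) :
    HasSum
      (fun j : ℕ =>
        (1 / (j.factorial : ℝ)) * ((s - s₀) / Real.sqrt δ) ^ j *
          hermiteFun j ((t - s₀) / Real.sqrt δ))
      (Real.exp (-(t - s) ^ 2 / δ)) := by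
  have harg : ((t - s₀) / Real.sqrt δ - (s - s₀) / Real.sqrt δ) ^ 2 = (t - s) ^ 2 / δ := by
    rw [← sub_div, div_pow, Real.sq_sqrt hδ.le, sub_sub_sub_cancel_right]
  simpa only [harg, neg_div] using
    hasSum_hermiteFun ((s - s₀) / Real.sqrt δ) ((t - s₀) / Real.sqrt δ)
end

section
/- The exponential (Ornstein–Uhlenbeck) covariance kernel yields full-rank covariance matrices: if x₁, …, xₙ are pairwise distinct real numbers, then the n×n matrix K with entries K_{ij} = exp(−|xᵢ − xⱼ|) is positive definite; in particular K is invertible (has full rank). -/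
/-! Write `Q_S(v) = ∑_{s,t ∈ S} v s v t e^{-|s-t|}` for a finite set `S ⊆ ℝ`. If `m` lies to the
right of `T`, with `M = max T` and `ρ = e^{-(m-M)} < 1`, then `e^{-|m-t|} = ρ e^{-|M-t|}` for
`t ∈ T` (the Markov property of the Ornstein–Uhlenbeck process), and completing the square gives
`Q_{T ∪ {m}}(v) = Q_T(v + ρ v_m δ_M) + (1 - ρ²) v_m²`. Adding points from left to right, induction
shows that `Q_S(v) > 0` as soon as `v` does not vanish on `S`. -/

open Finset Real Matrix

noncomputable def expKernelQuadForm (S : Finset ℝ) (v : ℝ → ℝ) : ℝ :=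
  ∑ s ∈ S, ∑ t ∈ S, v s * v t * exp (-|s - t|)

theorem expKernelQuadForm_add_single {T : Finset ℝ} {M : ℝ} (hM : M ∈ T) (v : ℝ → ℝ) (c : ℝ) :
    expKernelQuadForm T (v + Pi.single M c) =
      expKernelQuadForm T v + 2 * c * ∑ t ∈ T, v t * exp (-|M - t|) + c ^ 2 := by
  simp only [expKernelQuadForm, Pi.add_apply, Pi.single_apply, add_mul, mul_add, sum_add_distrib,
    ite_mul, mul_ite, zero_mul, mul_zero, sum_ite_irrel, sum_const_zero, sum_ite_eq', if_pos hM,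
    sub_self, abs_zero, neg_zero, exp_zero, abs_sub_comm _ M]
  simp only [mul_assoc, mul_left_comm _ c, ← mul_sum]
  ring

theorem exp_neg_abs_sub_eq_mul {t M m : ℝ} (htM : t ≤ M) (hMm : M < m) :
    exp (-|m - t|) = exp (-(m - M)) * exp (-|M - t|) := by
  rw [abs_of_pos (by linarith), abs_of_nonneg (by linarith), ← exp_add]
  ring_nf

theorem expKernelQuadForm_insert {T : Finset ℝ} {M m : ℝ} (hM : M ∈ T) (hT : ∀ t ∈ T, t ≤ M)
    (hMm : M < m) (v : ℝ → ℝ) :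
    expKernelQuadForm (insert m T) v =
      expKernelQuadForm T (v + Pi.single M (exp (-(m - M)) * v m)) +
        (1 - exp (-(m - M)) ^ 2) * v m ^ 2 := by
  have hm : m ∉ T := fun h => (hT m h).not_gt hMm
  set ρ := exp (-(m - M))
  set A := ∑ t ∈ T, v t * exp (-|M - t|)
  have hρ : ∀ t ∈ T, exp (-|m - t|) = ρ * exp (-|M - t|) :=
    fun t ht => exp_neg_abs_sub_eq_mul (hT t ht) hMm
  have hrow : ∑ t ∈ T, v m * v t * exp (-|m - t|) = ρ * v m * A := by
    rw [mul_sum]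
    exact sum_congr rfl fun t ht => by rw [hρ t ht]; ring
  have hcol : ∑ s ∈ T, v s * v m * exp (-|s - m|) = ρ * v m * A := by
    rw [mul_sum]
    exact sum_congr rfl fun t ht => by rw [abs_sub_comm, hρ t ht]; ring
  rw [expKernelQuadForm_add_single hM]
  simp only [expKernelQuadForm, sum_insert hm, sum_add_distrib, hrow, hcol, sub_self, abs_zero,
    neg_zero, exp_zero]
  ring

theorem expKernelQuadForm_singleton (m : ℝ) (v : ℝ → ℝ) :
    expKernelQuadForm {m} v = v m ^ 2 := by
  simp [expKernelQuadForm, sq]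

theorem one_sub_exp_neg_sq_pos {M m : ℝ} (hMm : M < m) : 0 < 1 - exp (-(m - M)) ^ 2 := by
  rw [sub_pos, pow_lt_one_iff_of_nonneg (exp_nonneg _) two_ne_zero, exp_lt_one_iff, neg_lt_zero,
    sub_pos]
  exact hMm

theorem expKernelQuadForm_nonneg (S : Finset ℝ) (v : ℝ → ℝ) : 0 ≤ expKernelQuadForm S v := by
  induction S using Finset.induction_on_max generalizing v with
  | empty => simp [expKernelQuadForm]
  | insert m T hT ih =>
    rcases T.eq_empty_or_nonempty with rfl | hne
    · rw [insert_empty, expKernelQuadForm_singleton]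
      positivity
    · have hMm := hT _ (T.max'_mem hne)
      rw [expKernelQuadForm_insert (T.max'_mem hne) (fun t ht => T.le_max' t ht) hMm]
      have := one_sub_exp_neg_sq_pos hMm
      exact add_nonneg (ih _) (by positivity)

theorem expKernelQuadForm_pos {S : Finset ℝ} {v : ℝ → ℝ} (h : ∃ s ∈ S, v s ≠ 0) :
    0 < expKernelQuadForm S v := by
  induction S using Finset.induction_on_max generalizing v with
  | empty => simp at h
  | insert m T hT ih =>
    rcases T.eq_empty_or_nonempty with rfl | hne
    · rw [insert_empty, expKernelQuadForm_singleton]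
      simp only [insert_empty, mem_singleton, exists_eq_left] at h
      positivity
    · have hMm := hT _ (T.max'_mem hne)
      rw [expKernelQuadForm_insert (T.max'_mem hne) (fun t ht => T.le_max' t ht) hMm]
      have := one_sub_exp_neg_sq_pos hMm
      by_cases hvm : v m = 0
      · obtain ⟨s, hs, hvs⟩ := h
        have hsT : s ∈ T := (mem_insert.1 hs).resolve_left (by rintro rfl; exact hvs hvm)
        rw [hvm, mul_zero, Pi.single_zero, add_zero]
        exact add_pos_of_pos_of_nonneg (ih ⟨s, hsT, hvs⟩) (by positivity)
      · exact add_pos_of_nonneg_of_pos (expKernelQuadForm_nonneg _ _) (by positivity)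

theorem exponential_kernel_posDef (n : ℕ) (x : Fin n → ℝ)
    (hx : Function.Injective x) :
    (Matrix.of fun i j : Fin n => Real.exp (-|x i - x j|)).PosDef := by
  refine posDef_iff_dotProduct_mulVec.2 ⟨?_, fun v hv => ?_⟩
  · ext i j
    simp [abs_sub_comm]
  set u := Function.extend x v 0
  have hu : ∀ i, u (x i) = v i := hx.extend_apply v 0
  have hquad : star v ⬝ᵥ (of (fun i j => exp (-|x i - x j|)) *ᵥ v) =
      expKernelQuadForm (univ.image x) u := by
    simp only [expKernelQuadForm, sum_image hx.injOn, hu, dotProduct, mulVec, of_apply,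
      star_trivial, mul_sum]
    exact sum_congr rfl fun i _ => sum_congr rfl fun j _ => by ring
  obtain ⟨i, hi⟩ := Function.ne_iff.1 hv
  rw [hquad]
  exact expKernelQuadForm_pos ⟨x i, mem_image_of_mem x (mem_univ i), by rwa [hu]⟩
end
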